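/- With notation as in the context, the (0,6)-tensor R·C − C·R vanishes identically if and only if μ = 0. (This is the pointwise algebraic form of: a Wintgen ideal submanifold satisfies R·C − C·R = 0 iff it is totally umbilical, and hence conformally flat.) -/
import Mathlib


noncomputable section

namespace Wintgen

/-- The standard inner product `g` on `ℝ^n`. -/
def gg (n : ℕ) (x y : Fin n → ℝ) : ℝ := ∑ i, x i * y i

/-- The standard orthonormal basis vectors `E_i` (0-indexed). -/
def E (n : ℕ) (i : Fin n) : Fin n → ℝ := fun j => if j = i then 1 else 0

/-- Auxiliary: the `j`-th coordinate of `x` (0 if out of range). -/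
def coord (n : ℕ) (x : Fin n → ℝ) (j : ℕ) : ℝ := if h : j < n then x ⟨j, h⟩ else 0

/-- The Choi–Lu shape operator `A_1`. -/
def A1 (n : ℕ) (a μ : ℝ) (x : Fin n → ℝ) : Fin n → ℝ := fun i =>
  if (i : ℕ) = 0 then a * x i + μ * coord n x 1
  else if (i : ℕ) = 1 then μ * coord n x 0 + a * x i
  else a * x i

/-- The Choi–Lu shape operator `A_2`. -/
def A2 (n : ℕ) (b μ : ℝ) (x : Fin n → ℝ) : Fin n → ℝ := fun i =>
  if (i : ℕ) = 0 then (b + μ) * x i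
  else if (i : ℕ) = 1 then (b - μ) * x i
  else b * x i

/-- The Choi–Lu shape operator `A_3 = c • id`. -/
def A3 (n : ℕ) (c : ℝ) (x : Fin n → ℝ) : Fin n → ℝ := fun i => c * x i

/-- The Gauss-equation curvature tensor `R`. -/
def Rt (n : ℕ) (a b c μ k : ℝ) (X Y Z W : Fin n → ℝ) : ℝ :=
  (gg n (A1 n a μ X) W * gg n (A1 n a μ Y) Z - gg n (A1 n a μ X) Z * gg n (A1 n a μ Y) W)
  + (gg n (A2 n b μ X) W * gg n (A2 n b μ Y) Z - gg n (A2 n b μ X) Z * gg n (A2 n b μ Y) W)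
  + (gg n (A3 n c X) W * gg n (A3 n c Y) Z - gg n (A3 n c X) Z * gg n (A3 n c Y) W)
  + k * (gg n X W * gg n Y Z - gg n X Z * gg n Y W)

/-- The Ricci tensor `Ricc(X,Y) = ∑ i, R(E_i, X, Y, E_i)`. -/
def Ricc (n : ℕ) (a b c μ k : ℝ) (X Y : Fin n → ℝ) : ℝ :=
  ∑ i, Rt n a b c μ k (E n i) X Y (E n i)

/-- The scalar curvature `τ`. -/
def tau (n : ℕ) (a b c μ k : ℝ) : ℝ := ∑ i, Ricc n a b c μ k (E n i) (E n i)

/-- The Kulkarni–Nomizu product of two bilinear forms. -/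
def KN (n : ℕ) (A B : (Fin n → ℝ) → (Fin n → ℝ) → ℝ) (X1 X2 X3 X4 : Fin n → ℝ) : ℝ :=
  A X1 X4 * B X2 X3 + A X2 X3 * B X1 X4 - A X1 X3 * B X2 X4 - A X2 X4 * B X1 X3

/-- The Weyl conformal curvature tensor `C`. -/
def Ct (n : ℕ) (a b c μ k : ℝ) (X Y Z W : Fin n → ℝ) : ℝ :=
  Rt n a b c μ k X Y Z W
    - (1 / ((n : ℝ) - 2)) * KN n (gg n) (Ricc n a b c μ k) X Y Z W
    + (tau n a b c μ k / (2 * ((n : ℝ) - 1) * ((n : ℝ) - 2))) * KN n (gg n) (gg n) X Y Z W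

/-- The endomorphism `(X ∧_A Y)` applied to `Z`. -/
def wedge (n : ℕ) (A : (Fin n → ℝ) → (Fin n → ℝ) → ℝ) (X Y Z : Fin n → ℝ) : Fin n → ℝ :=
  fun j => A Y Z * X j - A X Z * Y j

/-- The endomorphism determined by `g(Op(X,Y)Z, W) = T(X,Y,Z,W)`:
its `j`-th component is `T(X,Y,Z,E_j)`. -/
def curvOp (n : ℕ) (T : (Fin n → ℝ) → (Fin n → ℝ) → (Fin n → ℝ) → (Fin n → ℝ) → ℝ)
    (X Y Z : Fin n → ℝ) : Fin n → ℝ := fun j => T X Y Z (E n j)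

/-- Derivation-type action of a family of operators on a (0,4)-tensor. -/
def dotT (n : ℕ) (Op : (Fin n → ℝ) → (Fin n → ℝ) → (Fin n → ℝ) → (Fin n → ℝ))
    (T : (Fin n → ℝ) → (Fin n → ℝ) → (Fin n → ℝ) → (Fin n → ℝ) → ℝ)
    (X1 X2 X3 X4 X Y : Fin n → ℝ) : ℝ :=
  - T (Op X Y X1) X2 X3 X4 - T X1 (Op X Y X2) X3 X4
  - T X1 X2 (Op X Y X3) X4 - T X1 X2 X3 (Op X Y X4)

/-- The (0,6)-tensor `R · C`. -/
def RC (n : ℕ) (a b c μ k : ℝ) :=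
  dotT n (fun X Y => curvOp n (Rt n a b c μ k) X Y) (Ct n a b c μ k)

/-- The (0,6)-tensor `C · R`. -/
def CR (n : ℕ) (a b c μ k : ℝ) :=
  dotT n (fun X Y => curvOp n (Ct n a b c μ k) X Y) (Rt n a b c μ k)

/-- The Tachibana tensor `Q(A, T)`. -/
def Q (n : ℕ) (A : (Fin n → ℝ) → (Fin n → ℝ) → ℝ)
    (T : (Fin n → ℝ) → (Fin n → ℝ) → (Fin n → ℝ) → (Fin n → ℝ) → ℝ) :=
  dotT n (fun X Y => wedge n A X Y) T

/- ### Auxiliary lemmas -/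

lemma gg_E {n : ℕ} (i : Fin n) (X : Fin n → ℝ) : gg n (E n i) X = X i := by
  simp [gg, E, Finset.sum_ite_eq]

lemma gg_E' {n : ℕ} (i : Fin n) (X : Fin n → ℝ) : gg n X (E n i) = X i := by
  simp [gg, E, Finset.sum_ite_eq']

lemma E_self {n : ℕ} (i : Fin n) : E n i i = 1 := by simp [E]

lemma coord_lt {n j : ℕ} (h : j < n) (X : Fin n → ℝ) : coord n X j = X ⟨j, h⟩ := by
  simp [coord, h]

lemma coord_E {n j : ℕ} (h : j < n) (i : Fin n) :
    coord n (E n i) j = if (i : ℕ) = j then 1 else 0 := by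
  simp [coord, h, E, Fin.ext_iff, eq_comm]

lemma sum_pair {n : ℕ} (h2 : 2 ≤ n) (f : Fin n → ℝ) (g0 g1 : ℝ) :
    (∑ i : Fin n, (if (i:ℕ) = 0 then g0 * f i else if (i:ℕ) = 1 then g1 * f i else 0))
      = g0 * coord n f 0 + g1 * coord n f 1 := by
  have h0 : 0 < n := by omega
  have h1 : 1 < n := by omega
  have key : ∀ i : Fin n, (if (i:ℕ) = 0 then g0 * f i else if (i:ℕ) = 1 then g1 * f i else 0)
      = (if i = ⟨0, h0⟩ then g0 * f i else 0) + (if i = ⟨1, h1⟩ then g1 * f i else 0) := by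
    intro i
    by_cases hi0 : (i:ℕ) = 0
    · have : i = ⟨0, h0⟩ := Fin.ext hi0
      subst this; simp [Fin.ext_iff]
    · by_cases hi1 : (i:ℕ) = 1
      · have : i = ⟨1, h1⟩ := Fin.ext hi1
        subst this; simp [Fin.ext_iff]
      · simp [hi0, hi1, Fin.ext_iff]
  rw [Finset.sum_congr rfl (fun i _ => key i), Finset.sum_add_distrib,
    Finset.sum_ite_eq', Finset.sum_ite_eq']
  simp [coord_lt h0, coord_lt h1]

lemma gA1 {n : ℕ} (h2 : 2 ≤ n) (a μ : ℝ) (X Y : Fin n → ℝ) :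
    gg n (A1 n a μ X) Y = a * gg n X Y
      + μ * (coord n X 0 * coord n Y 1 + coord n X 1 * coord n Y 0) := by
  have key : ∀ i : Fin n, A1 n a μ X i * Y i
      = a * (X i * Y i)
        + (if (i:ℕ) = 0 then (μ * coord n X 1) * Y i
           else if (i:ℕ) = 1 then (μ * coord n X 0) * Y i else 0) := by
    intro i
    by_cases hi0 : (i:ℕ) = 0
    · simp only [A1, hi0, if_true]; ring
    · by_cases hi1 : (i:ℕ) = 1
      · simp only [A1, hi0, hi1, if_false]; norm_num; ring
      · simp only [A1, hi0, hi1, if_false]; ring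
  calc gg n (A1 n a μ X) Y = ∑ i, A1 n a μ X i * Y i := rfl
    _ = ∑ i, (a * (X i * Y i)
        + (if (i:ℕ) = 0 then (μ * coord n X 1) * Y i
           else if (i:ℕ) = 1 then (μ * coord n X 0) * Y i else 0)) :=
      Finset.sum_congr rfl (fun i _ => key i)
    _ = a * gg n X Y + μ * (coord n X 0 * coord n Y 1 + coord n X 1 * coord n Y 0) := by
      rw [Finset.sum_add_distrib, ← Finset.mul_sum, sum_pair h2]
      show a * gg n X Y + _ = _
      ring

lemma gA2 {n : ℕ} (h2 : 2 ≤ n) (b μ : ℝ) (X Y : Fin n → ℝ) :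
    gg n (A2 n b μ X) Y = b * gg n X Y
      + μ * (coord n X 0 * coord n Y 0 - coord n X 1 * coord n Y 1) := by
  have h0 : 0 < n := by omega
  have h1 : 1 < n := by omega
  have key : ∀ i : Fin n, A2 n b μ X i * Y i
      = b * (X i * Y i)
        + (if (i:ℕ) = 0 then (μ * coord n X 0) * Y i
           else if (i:ℕ) = 1 then (-(μ * coord n X 1)) * Y i else 0) := by
    intro i
    by_cases hi0 : (i:ℕ) = 0
    · have : i = ⟨0, h0⟩ := Fin.ext hi0
      subst this
      simp only [A2, if_true, coord_lt h0]
      ring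
    · by_cases hi1 : (i:ℕ) = 1
      · have : i = ⟨1, h1⟩ := Fin.ext hi1
        subst this
        simp only [A2, hi0, hi1, if_false, coord_lt h1]
        norm_num
        ring
      · simp only [A2, hi0, hi1, if_false]; ring
  calc gg n (A2 n b μ X) Y = ∑ i, A2 n b μ X i * Y i := rfl
    _ = _ := Finset.sum_congr rfl (fun i _ => key i)
    _ = b * gg n X Y + μ * (coord n X 0 * coord n Y 0 - coord n X 1 * coord n Y 1) := by
      rw [Finset.sum_add_distrib, ← Finset.mul_sum, sum_pair h2]
      show b * gg n X Y + _ = _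
      ring

lemma gA3 {n : ℕ} (c : ℝ) (X Y : Fin n → ℝ) : gg n (A3 n c X) Y = c * gg n X Y := by
  simp [gg, A3, Finset.mul_sum, mul_assoc]

lemma Rt_eq {n : ℕ} (h2 : 2 ≤ n) (a b c μ k : ℝ) (X Y Z W : Fin n → ℝ) :
    Rt n a b c μ k X Y Z W =
      (a * gg n X W + μ * (coord n X 0 * coord n W 1 + coord n X 1 * coord n W 0))
        * (a * gg n Y Z + μ * (coord n Y 0 * coord n Z 1 + coord n Y 1 * coord n Z 0))
      - (a * gg n X Z + μ * (coord n X 0 * coord n Z 1 + coord n X 1 * coord n Z 0))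
        * (a * gg n Y W + μ * (coord n Y 0 * coord n W 1 + coord n Y 1 * coord n W 0))
      + ((b * gg n X W + μ * (coord n X 0 * coord n W 0 - coord n X 1 * coord n W 1))
        * (b * gg n Y Z + μ * (coord n Y 0 * coord n Z 0 - coord n Y 1 * coord n Z 1))
      - (b * gg n X Z + μ * (coord n X 0 * coord n Z 0 - coord n X 1 * coord n Z 1))
        * (b * gg n Y W + μ * (coord n Y 0 * coord n W 0 - coord n Y 1 * coord n W 1)))
      + (c^2 + k) * (gg n X W * gg n Y Z - gg n X Z * gg n Y W) := by
  simp only [Rt, gA1 h2, gA2 h2, gA3]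
  ring

lemma Ricc_eq {n : ℕ} (h2 : 2 ≤ n) (a b c μ k : ℝ) (X Y : Fin n → ℝ) :
    Ricc n a b c μ k X Y =
      ((n:ℝ) - 1) * (a^2 + b^2 + c^2 + k) * gg n X Y
      + ((n:ℝ) - 2) * μ *
          (a * (coord n X 0 * coord n Y 1 + coord n X 1 * coord n Y 0)
           + b * (coord n X 0 * coord n Y 0 - coord n X 1 * coord n Y 1))
      - 2 * μ^2 * (coord n X 0 * coord n Y 0 + coord n X 1 * coord n Y 1) := by
  have h0 : 0 < n := by omega
  have h1 : 1 < n := by omega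
  set x0 := coord n X 0 with hx0
  set x1 := coord n X 1 with hx1
  set y0 := coord n Y 0 with hy0
  set y1 := coord n Y 1 with hy1
  set G := gg n X Y with hG
  set σ := a^2 + b^2 + c^2 + k with hσ
  have key : ∀ i : Fin n, Rt n a b c μ k (E n i) X Y (E n i)
      = (σ * G + μ * (a * (x0*y1 + x1*y0) + b * (x0*y0 - x1*y1)))
        + (-σ) * (X i * Y i)
        + (if i = ⟨0,h0⟩ then (-2*μ^2*x1*y1 + b*μ*(G - 2*x0*y0) - a*μ*(x0*y1+x1*y0)) else 0)
        + (if i = ⟨1,h1⟩ then (-2*μ^2*x0*y0 - b*μ*(G - 2*x1*y1) - a*μ*(x0*y1+x1*y0)) else 0) := by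
    intro i
    simp only [Rt_eq h2, gg_E, gg_E', E_self, coord_E h0, coord_E h1]
    by_cases hi0 : (i:ℕ) = 0
    · have hieq : i = ⟨0,h0⟩ := Fin.ext hi0
      subst hieq
      rw [show X ⟨0,h0⟩ = x0 from (coord_lt h0 X).symm, show Y ⟨0,h0⟩ = y0 from (coord_lt h0 Y).symm]
      simp only [if_pos rfl, Fin.mk.injEq, hσ]
      norm_num
      ring
    · by_cases hi1 : (i:ℕ) = 1
      · have hieq : i = ⟨1,h1⟩ := Fin.ext hi1
        subst hieq
        rw [show X ⟨1,h1⟩ = x1 from (coord_lt h1 X).symm, show Y ⟨1,h1⟩ = y1 from (coord_lt h1 Y).symm]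
        simp only [Fin.mk.injEq, hσ]
        norm_num
        ring
      · have e0 : i ≠ ⟨0,h0⟩ := by simp [Fin.ext_iff, hi0]
        have e1 : i ≠ ⟨1,h1⟩ := by simp [Fin.ext_iff, hi1]
        simp only [hi0, hi1, if_neg e0, if_neg e1, if_false, hσ]
        ring
  calc Ricc n a b c μ k X Y
      = ∑ i : Fin n, ((σ * G + μ * (a * (x0*y1 + x1*y0) + b * (x0*y0 - x1*y1)))
        + (-σ) * (X i * Y i)
        + (if i = ⟨0,h0⟩ then (-2*μ^2*x1*y1 + b*μ*(G - 2*x0*y0) - a*μ*(x0*y1+x1*y0)) else 0)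
        + (if i = ⟨1,h1⟩ then (-2*μ^2*x0*y0 - b*μ*(G - 2*x1*y1) - a*μ*(x0*y1+x1*y0)) else 0)) :=
      Finset.sum_congr rfl (fun i _ => key i)
    _ = (n:ℝ) * (σ * G + μ * (a * (x0*y1 + x1*y0) + b * (x0*y0 - x1*y1)))
        + (-σ) * G
        + (-2*μ^2*x1*y1 + b*μ*(G - 2*x0*y0) - a*μ*(x0*y1+x1*y0))
        + (-2*μ^2*x0*y0 - b*μ*(G - 2*x1*y1) - a*μ*(x0*y1+x1*y0)) := by
      rw [Finset.sum_add_distrib, Finset.sum_add_distrib, Finset.sum_add_distrib,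
        Finset.sum_const, ← Finset.mul_sum, Finset.sum_ite_eq', Finset.sum_ite_eq']
      simp [Finset.card_univ, nsmul_eq_mul, hG, gg]
      ring
    _ = _ := by ring

lemma tau_eq {n : ℕ} (h2 : 2 ≤ n) (a b c μ k : ℝ) :
    tau n a b c μ k = (n:ℝ) * ((n:ℝ) - 1) * (a^2 + b^2 + c^2 + k) - 4 * μ^2 := by
  have h0 : 0 < n := by omega
  have h1 : 1 < n := by omega
  have key : ∀ i : Fin n, Ricc n a b c μ k (E n i) (E n i)
      = ((n:ℝ) - 1) * (a^2 + b^2 + c^2 + k)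
        + (if i = ⟨0,h0⟩ then (((n:ℝ) - 2) * μ * b - 2*μ^2) else 0)
        + (if i = ⟨1,h1⟩ then (-(((n:ℝ) - 2) * μ * b) - 2*μ^2) else 0) := by
    intro i
    rw [Ricc_eq h2, coord_E h0, coord_E h1]
    have : gg n (E n i) (E n i) = 1 := by rw [gg_E]; simp [E]
    rw [this]
    by_cases hi0 : (i:ℕ) = 0
    · have hieq : i = ⟨0,h0⟩ := Fin.ext hi0
      subst hieq
      norm_num
      ring
    · by_cases hi1 : (i:ℕ) = 1
      · have hieq : i = ⟨1,h1⟩ := Fin.ext hi1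
        subst hieq
        norm_num
        ring
      · have e0 : i ≠ ⟨0,h0⟩ := by simp [Fin.ext_iff, hi0]
        have e1 : i ≠ ⟨1,h1⟩ := by simp [Fin.ext_iff, hi1]
        simp only [hi0, hi1, if_neg e0, if_neg e1, if_false]
        ring
  calc tau n a b c μ k
      = ∑ i : Fin n, (((n:ℝ) - 1) * (a^2 + b^2 + c^2 + k)
        + (if i = ⟨0,h0⟩ then (((n:ℝ) - 2) * μ * b - 2*μ^2) else 0)
        + (if i = ⟨1,h1⟩ then (-(((n:ℝ) - 2) * μ * b) - 2*μ^2) else 0)) :=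
      Finset.sum_congr rfl (fun i _ => key i)
    _ = _ := by
      rw [Finset.sum_add_distrib, Finset.sum_add_distrib,
        Finset.sum_const, Finset.sum_ite_eq', Finset.sum_ite_eq']
      simp [Finset.card_univ, nsmul_eq_mul]
      ring

lemma gg_zeroL {n : ℕ} (W : Fin n → ℝ) : gg n (fun _ => 0) W = 0 := by simp [gg]

lemma gg_zeroR {n : ℕ} (W : Fin n → ℝ) : gg n W (fun _ => 0) = 0 := by simp [gg]

lemma coord_zero {n j : ℕ} : coord n (fun _ => (0:ℝ)) j = 0 := by
  unfold coord; split <;> rfl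

lemma Ct_zero {n : ℕ} (h3 : 3 ≤ n) (a b c k : ℝ) (X Y Z W : Fin n → ℝ) :
    Ct n a b c 0 k X Y Z W = 0 := by
  have h2 : 2 ≤ n := by omega
  have hn3 : (3:ℝ) ≤ (n:ℝ) := by exact_mod_cast h3
  have hne1 : ((n:ℝ) - 1) ≠ 0 := by intro hc; nlinarith
  have hne2 : ((n:ℝ) - 2) ≠ 0 := by intro hc; nlinarith
  simp only [Ct, KN, Rt_eq h2, Ricc_eq h2, tau_eq h2]
  field_simp
  ring

lemma Rt_zero1 {n : ℕ} (h2 : 2 ≤ n) (a b c μ k : ℝ) (Y Z W : Fin n → ℝ) :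
    Rt n a b c μ k (fun _ => 0) Y Z W = 0 := by
  rw [Rt_eq h2]; simp only [gg_zeroL, gg_zeroR, coord_zero]; ring

lemma Rt_zero2 {n : ℕ} (h2 : 2 ≤ n) (a b c μ k : ℝ) (X Z W : Fin n → ℝ) :
    Rt n a b c μ k X (fun _ => 0) Z W = 0 := by
  rw [Rt_eq h2]; simp only [gg_zeroL, gg_zeroR, coord_zero]; ring

lemma Rt_zero3 {n : ℕ} (h2 : 2 ≤ n) (a b c μ k : ℝ) (X Y W : Fin n → ℝ) :
    Rt n a b c μ k X Y (fun _ => 0) W = 0 := by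
  rw [Rt_eq h2]; simp only [gg_zeroL, gg_zeroR, coord_zero]; ring

lemma Rt_zero4 {n : ℕ} (h2 : 2 ≤ n) (a b c μ k : ℝ) (X Y Z : Fin n → ℝ) :
    Rt n a b c μ k X Y Z (fun _ => 0) = 0 := by
  rw [Rt_eq h2]; simp only [gg_zeroL, gg_zeroR, coord_zero]; ring

set_option maxHeartbeats 3000000 in
/-- `R · C − C · R = 0` iff `μ = 0`. -/
theorem statement_6 (n : ℕ) (hn : 4 ≤ n) (a b c μ k : ℝ) :
    (∀ X1 X2 X3 X4 X Y : Fin n → ℝ,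
        RC n a b c μ k X1 X2 X3 X4 X Y - CR n a b c μ k X1 X2 X3 X4 X Y = 0) ↔ μ = 0 := by
  have h2 : 2 ≤ n := by omega
  have h3 : 3 ≤ n := by omega
  have h0 : 0 < n := by omega
  have h1 : 1 < n := by omega
  have hl2 : 2 < n := by omega
  have hl3 : 3 < n := by omega
  have hn4 : (4:ℝ) ≤ (n:ℝ) := by exact_mod_cast hn
  have hne1 : ((n:ℝ) - 1) ≠ 0 := by intro hc; nlinarith
  have hne2 : ((n:ℝ) - 2) ≠ 0 := by intro hc; nlinarith
  constructor
  · intro h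
    have evalA : RC n a b c μ k (E n ⟨0,h0⟩) (E n ⟨2,hl2⟩) (E n ⟨2,hl2⟩) (E n ⟨3,hl3⟩) (E n ⟨0,h0⟩) (E n ⟨3,hl3⟩)
        - CR n a b c μ k (E n ⟨0,h0⟩) (E n ⟨2,hl2⟩) (E n ⟨2,hl2⟩) (E n ⟨3,hl3⟩) (E n ⟨0,h0⟩) (E n ⟨3,hl3⟩)
        = (-(4 * ((n:ℝ)-1) * (a^2+b^2+c^2+k) * μ^2) - 8*b*μ^3) / (2*((n:ℝ)-1)*((n:ℝ)-2)) := by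
      simp only [RC, CR, dotT, curvOp, Ct, KN, Rt_eq h2, Ricc_eq h2, tau_eq h2,
        gg_E, gg_E', coord_lt h0, coord_lt h1]
      simp only [E, Fin.mk.injEq]
      norm_num
      field_simp
      ring
    have evalB : RC n a b c μ k (E n ⟨1,h1⟩) (E n ⟨2,hl2⟩) (E n ⟨2,hl2⟩) (E n ⟨3,hl3⟩) (E n ⟨1,h1⟩) (E n ⟨3,hl3⟩)
        - CR n a b c μ k (E n ⟨1,h1⟩) (E n ⟨2,hl2⟩) (E n ⟨2,hl2⟩) (E n ⟨3,hl3⟩) (E n ⟨1,h1⟩) (E n ⟨3,hl3⟩)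
        = (-(4 * ((n:ℝ)-1) * (a^2+b^2+c^2+k) * μ^2) + 8*b*μ^3) / (2*((n:ℝ)-1)*((n:ℝ)-2)) := by
      simp only [RC, CR, dotT, curvOp, Ct, KN, Rt_eq h2, Ricc_eq h2, tau_eq h2,
        gg_E, gg_E', coord_lt h0, coord_lt h1]
      simp only [E, Fin.mk.injEq]
      norm_num
      field_simp
      ring
    have evalC : RC n a b c μ k (E n ⟨0,h0⟩) (E n ⟨1,h1⟩) (E n ⟨0,h0⟩) (E n ⟨2,hl2⟩) (E n ⟨1,h1⟩) (E n ⟨2,hl2⟩)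
        - CR n a b c μ k (E n ⟨0,h0⟩) (E n ⟨1,h1⟩) (E n ⟨0,h0⟩) (E n ⟨2,hl2⟩) (E n ⟨1,h1⟩) (E n ⟨2,hl2⟩)
        = (-(4 * ((n:ℝ)-1) * ((n:ℝ)-3) * (a^2+b^2+c^2+k) * μ^2) + 8*((n:ℝ)-3)*μ^4
            + 4*(n:ℝ)*((n:ℝ)-3)*b*μ^3) / (2*((n:ℝ)-1)*((n:ℝ)-2)) := by
      simp only [RC, CR, dotT, curvOp, Ct, KN, Rt_eq h2, Ricc_eq h2, tau_eq h2,
        gg_E, gg_E', coord_lt h0, coord_lt h1]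
      simp only [E, Fin.mk.injEq]
      norm_num
      field_simp
      ring
    have hdenom : 2*((n:ℝ)-1)*((n:ℝ)-2) ≠ 0 := mul_ne_zero (mul_ne_zero two_ne_zero hne1) hne2
    have hA := h (E n ⟨0,h0⟩) (E n ⟨2,hl2⟩) (E n ⟨2,hl2⟩) (E n ⟨3,hl3⟩) (E n ⟨0,h0⟩) (E n ⟨3,hl3⟩)
    have hB := h (E n ⟨1,h1⟩) (E n ⟨2,hl2⟩) (E n ⟨2,hl2⟩) (E n ⟨3,hl3⟩) (E n ⟨1,h1⟩) (E n ⟨3,hl3⟩)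
    have hC := h (E n ⟨0,h0⟩) (E n ⟨1,h1⟩) (E n ⟨0,h0⟩) (E n ⟨2,hl2⟩) (E n ⟨1,h1⟩) (E n ⟨2,hl2⟩)
    rw [evalA] at hA
    rw [evalB] at hB
    rw [evalC] at hC
    have numA := (div_eq_zero_iff.mp hA).resolve_right hdenom
    have numB := (div_eq_zero_iff.mp hB).resolve_right hdenom
    have numC := (div_eq_zero_iff.mp hC).resolve_right hdenom
    have hs : ((n:ℝ)-1)*(a^2+b^2+c^2+k)*μ^2 = 0 := by
      linear_combination (-1/8 : ℝ) * numA + (-1/8 : ℝ) * numB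
    have hb : b*μ^3 = 0 := by
      linear_combination (-1/16 : ℝ) * numA + (1/16 : ℝ) * numB
    have h8 : (8*((n:ℝ)-3))*μ^4 = 0 := by
      linear_combination numC + 4*((n:ℝ)-3)*hs - 4*(n:ℝ)*((n:ℝ)-3)*hb
    have h4 : μ^4 = 0 := by
      rcases mul_eq_zero.mp h8 with hcase | hcase
      · exfalso; nlinarith
      · exact hcase
    exact pow_eq_zero_iff (by norm_num : 4 ≠ 0) |>.mp h4
  · intro hμ X1 X2 X3 X4 X Y
    subst hμ
    have hct : ∀ U V Z W : Fin n → ℝ, Ct n a b c 0 k U V Z W = 0 := Ct_zero h3 a b c k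
    have hop : ∀ U V Z : Fin n → ℝ, curvOp n (Ct n a b c 0 k) U V Z = (fun _ => 0) := by
      intro U V Z; funext j; simp [curvOp, hct]
    simp only [RC, CR, dotT, hct, hop, Rt_zero1 h2, Rt_zero2 h2, Rt_zero3 h2, Rt_zero4 h2]
    norm_num

end Wintgen
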